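/- A Lloyd-Topor program Π is tight if and only if there exists a positive integer n such that the rule dependency graph of Π has no paths of length n (Proposition 2). -/
import Mathlib


/- ## First-order logic with named variables -/

namespace LT

/-- A first-order signature: function symbols and predicate symbols with arities. -/
structure Signature where
  Func : Type
  fnArity : Func → ℕ
  Pred : Type
  prArity : Pred → ℕ

/-- First-order terms (variables are natural numbers). -/
inductive Term (σ : Signature) : Type
  | var : ℕ → Term σ
  | func (f : σ.Func) (args : Fin (σ.fnArity f) → Term σ) : Term σ

/-- First-order formulas built from ⊥, atoms, equality, ∧, ∨, →, ∀, ∃. -/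
inductive Fml (σ : Signature) : Type
  | falsum : Fml σ
  | atom (p : σ.Pred) (args : Fin (σ.prArity p) → Term σ) : Fml σ
  | eq (t₁ t₂ : Term σ) : Fml σ
  | and (F G : Fml σ) : Fml σ
  | or (F G : Fml σ) : Fml σ
  | imp (F G : Fml σ) : Fml σ
  | all (n : ℕ) (F : Fml σ) : Fml σ
  | ex (n : ℕ) (F : Fml σ) : Fml σ

variable {σ : Signature}

/-- ¬F is an abbreviation for F → ⊥. -/
def Fml.not (F : Fml σ) : Fml σ := F.imp .falsum

/-- ⊤ stands for ⊥ → ⊥. -/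
def Fml.verum : Fml σ := Fml.not .falsum

/-- F ↔ G stands for (F → G) ∧ (G → F). -/
def Fml.iff (F G : Fml σ) : Fml σ := (F.imp G).and (G.imp F)

/-- A ground atom over a universe `U`: a predicate symbol with a tuple of
universe elements as arguments. -/
abbrev GAtom (σ : Signature) (U : Type) := Σ p : σ.Pred, Fin (σ.prArity p) → U

/-- A first-order interpretation. -/
structure Interp (σ : Signature) where
  U : Type
  nonempty : Nonempty U
  fn (f : σ.Func) : (Fin (σ.fnArity f) → U) → U
  rel : GAtom σ U → Prop

/-- Value of a term under an interpretation and an assignment of variables. -/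
def Term.eval (I : Interp σ) (v : ℕ → I.U) : Term σ → I.U
  | .var n => v n
  | .func f ts => I.fn f fun i => (ts i).eval I v

/-- Tarskian satisfaction. -/
def Fml.Sat (I : Interp σ) (v : ℕ → I.U) : Fml σ → Prop
  | .falsum => False
  | .atom p ts => I.rel ⟨p, fun i => (ts i).eval I v⟩
  | .eq t₁ t₂ => t₁.eval I v = t₂.eval I v
  | .and F G => F.Sat I v ∧ G.Sat I v
  | .or F G => F.Sat I v ∨ G.Sat I v
  | .imp F G => F.Sat I v → G.Sat I v
  | .all n F => ∀ d : I.U, F.Sat I (Function.update v n d)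
  | .ex n F => ∃ d : I.U, F.Sat I (Function.update v n d)

/-- `I` satisfies (the universal closure of) every formula in `Γ`. -/
def Interp.satAll (I : Interp σ) (Γ : Set (Fml σ)) : Prop :=
  ∀ F ∈ Γ, ∀ v : ℕ → I.U, F.Sat I v

/-- The predicate symbols occurring in a formula. -/
def Fml.hasPred : Fml σ → σ.Pred → Prop
  | .falsum, _ => False
  | .atom p _, q => p = q
  | .eq _ _, _ => False
  | .and F G, q => F.hasPred q ∨ G.hasPred q
  | .or F G, q => F.hasPred q ∨ G.hasPred q
  | .imp F G, q => F.hasPred q ∨ G.hasPred q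
  | .all _ F, q => F.hasPred q
  | .ex _ F, q => F.hasPred q

/- ## Lloyd-Topor programs, completion -/

/-- A Lloyd-Topor rule  p(t) ← G. -/
structure Rule (σ : Signature) where
  head : σ.Pred
  args : Fin (σ.prArity head) → Term σ
  body : Fml σ

/-- The rule p(t) ← G read as the formula G → p(t)
(its universal closure is implicit in satisfaction). -/
def Rule.fml (R : Rule σ) : Fml σ := R.body.imp (.atom R.head R.args)

/-- The ground atom obtained by evaluating the head of a rule. -/
def Rule.headEval (R : Rule σ) (I : Interp σ) (v : ℕ → I.U) : GAtom σ I.U :=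
  ⟨R.head, fun i => (R.args i).eval I v⟩

/-- The predicate constants occurring in a program. -/
def progPreds (Pr : List (Rule σ)) : Set σ.Pred :=
  {p | ∃ R ∈ Pr, R.fml.hasPred p}

/-- `I` satisfies the program `Pr`, i.e. the conjunction of the universal
closures of G → p(t) over all rules p(t) ← G of Pr. -/
def Interp.satProg (I : Interp σ) (Pr : List (Rule σ)) : Prop :=
  ∀ R ∈ Pr, ∀ v : ℕ → I.U, R.fml.Sat I v

/-- `I` satisfies Comp[Pr], the conjunction of the completed definitions
∀x(p(x) ↔ ⋁ᵢ ∃yⁱ (x = tⁱ ∧ Gⁱ)) of all predicate constants p of Pr. -/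
def Interp.satComp (I : Interp σ) (Pr : List (Rule σ)) : Prop :=
  ∀ A : GAtom σ I.U, A.1 ∈ progPreds Pr →
    (I.rel A ↔ ∃ R ∈ Pr, ∃ v : ℕ → I.U, R.headEval I v = A ∧ R.body.Sat I v)

/- ## The operator SM -/

/-- Satisfaction of the Ferraris–Lee–Lifschitz transform F*(u), where `u`
reinterprets the intensional predicates `ints`. -/
def Fml.SatStar (I : Interp σ) (ints : Set σ.Pred) (u : GAtom σ I.U → Prop)
    (v : ℕ → I.U) : Fml σ → Prop
  | .falsum => False
  | .atom p ts =>
      (p ∈ ints ∧ u ⟨p, fun i => (ts i).eval I v⟩) ∨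
      (p ∉ ints ∧ I.rel ⟨p, fun i => (ts i).eval I v⟩)
  | .eq t₁ t₂ => t₁.eval I v = t₂.eval I v
  | .and F G => F.SatStar I ints u v ∧ G.SatStar I ints u v
  | .or F G => F.SatStar I ints u v ∨ G.SatStar I ints u v
  | .imp F G => (F.SatStar I ints u v → G.SatStar I ints u v) ∧ (F.Sat I v → G.Sat I v)
  | .all n F => ∀ d : I.U, F.SatStar I ints u (Function.update v n d)
  | .ex n F => ∃ d : I.U, F.SatStar I ints u (Function.update v n d)

/-- u < p : on the intensional predicates, `u` is contained in the relations of
`I` and is not equal to them. -/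
def predLt (I : Interp σ) (ints : Set σ.Pred) (u : GAtom σ I.U → Prop) : Prop :=
  (∀ A : GAtom σ I.U, A.1 ∈ ints → u A → I.rel A) ∧
  ¬ (∀ A : GAtom σ I.U, A.1 ∈ ints → (u A ↔ I.rel A))

/-- `I` satisfies SM[Pr] (with intensional predicates `ints`), for a
Lloyd-Topor program Pr. -/
def Interp.satSM (I : Interp σ) (ints : Set σ.Pred) (Pr : List (Rule σ)) : Prop :=
  I.satProg Pr ∧
  ¬ ∃ u : GAtom σ I.U → Prop, predLt I ints u ∧
      ∀ R ∈ Pr, ∀ v : ℕ → I.U, R.fml.SatStar I ints u v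

/-- The predicate symbols occurring in a set of sentences. -/
def fmlSetPreds (Fs : Set (Fml σ)) : Set σ.Pred := {p | ∃ F ∈ Fs, F.hasPred p}

/-- `I` satisfies SM[F] (with intensional predicates `ints`) where `F` is the
conjunction of the universal closures of the members of `Fs`. -/
def Interp.satSMSet (I : Interp σ) (ints : Set σ.Pred) (Fs : Set (Fml σ)) : Prop :=
  I.satAll Fs ∧
  ¬ ∃ u : GAtom σ I.U → Prop, predLt I ints u ∧
      ∀ F ∈ Fs, ∀ v : ℕ → I.U, F.SatStar I ints u v

/- ## Predicate dependency graph and tightness -/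

mutual
  /-- Predicates with a positive nonnegated occurrence. -/
  def Fml.pnn : Fml σ → Set σ.Pred
    | .falsum => ∅
    | .atom p _ => {p}
    | .eq _ _ => ∅
    | .and F G => F.pnn ∪ G.pnn
    | .or F G => F.pnn ∪ G.pnn
    | .imp _ .falsum => ∅
    | .imp F G => F.nnn ∪ G.pnn
    | .all _ F => F.pnn
    | .ex _ F => F.pnn
  /-- Predicates with a negative nonnegated occurrence. -/
  def Fml.nnn : Fml σ → Set σ.Pred
    | .falsum => ∅
    | .atom _ _ => ∅
    | .eq _ _ => ∅
    | .and F G => F.nnn ∪ G.nnn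
    | .or F G => F.nnn ∪ G.nnn
    | .imp _ .falsum => ∅
    | .imp F G => F.pnn ∪ G.nnn
    | .all _ F => F.nnn
    | .ex _ F => F.nnn
end

/-- Edge of the predicate dependency graph of Pr. -/
def depEdge (Pr : List (Rule σ)) (p q : σ.Pred) : Prop :=
  ∃ R ∈ Pr, R.head = p ∧ q ∈ R.body.pnn

/-- Pr is tight: its predicate dependency graph is acyclic. -/
def Tight (Pr : List (Rule σ)) : Prop :=
  ∀ p : σ.Pred, ¬ Relation.TransGen (depEdge Pr) p p

/- ## Rule dependency graph, chains -/

/-- Renaming of variables in a term. -/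
def Term.rename (ρ : ℕ → ℕ) : Term σ → Term σ
  | .var n => .var (ρ n)
  | .func f ts => .func f fun i => (ts i).rename ρ

/-- Renaming of variables (free and bound) in a formula. -/
def Fml.rename (ρ : ℕ → ℕ) : Fml σ → Fml σ
  | .falsum => .falsum
  | .atom p ts => .atom p fun i => (ts i).rename ρ
  | .eq t₁ t₂ => .eq (t₁.rename ρ) (t₂.rename ρ)
  | .and F G => .and (F.rename ρ) (G.rename ρ)
  | .or F G => .or (F.rename ρ) (G.rename ρ)
  | .imp F G => .imp (F.rename ρ) (G.rename ρ)
  | .all n F => .all (ρ n) (F.rename ρ)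
  | .ex n F => .ex (ρ n) (F.rename ρ)

/-- Renaming of variables in a rule. -/
def Rule.rename (ρ : ℕ → ℕ) (R : Rule σ) : Rule σ :=
  ⟨R.head, fun i => (R.args i).rename ρ, R.body.rename ρ⟩

/-- Vertices of the rule dependency graph of Pr: rules of Pr with variables
(both free and bound) renamed arbitrarily. -/
def isVariant (Pr : List (Rule σ)) (R' : Rule σ) : Prop :=
  ∃ R ∈ Pr, ∃ ρ : ℕ → ℕ, Function.Injective ρ ∧ R' = R.rename ρ

/-- A (syntactic) atomic formula p(s). -/
abbrev TAtom (σ : Signature) := Σ p : σ.Pred, Fin (σ.prArity p) → Term σ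

mutual
  /-- Atomic formulas with a positive nonnegated occurrence. -/
  def Fml.pnnAtoms : Fml σ → Set (TAtom σ)
    | .falsum => ∅
    | .atom p ts => {⟨p, ts⟩}
    | .eq _ _ => ∅
    | .and F G => F.pnnAtoms ∪ G.pnnAtoms
    | .or F G => F.pnnAtoms ∪ G.pnnAtoms
    | .imp _ .falsum => ∅
    | .imp F G => F.nnnAtoms ∪ G.pnnAtoms
    | .all _ F => F.pnnAtoms
    | .ex _ F => F.pnnAtoms
  /-- Atomic formulas with a negative nonnegated occurrence. -/
  def Fml.nnnAtoms : Fml σ → Set (TAtom σ)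
    | .falsum => ∅
    | .atom _ _ => ∅
    | .eq _ _ => ∅
    | .and F G => F.nnnAtoms ∪ G.nnnAtoms
    | .or F G => F.nnnAtoms ∪ G.nnnAtoms
    | .imp _ .falsum => ∅
    | .imp F G => F.pnnAtoms ∪ G.nnnAtoms
    | .all _ F => F.nnnAtoms
    | .ex _ F => F.nnnAtoms
end

/-- Candidate path of length `n` in the rule dependency graph: rules
R₀,...,Rₙ and edge labels A₁,...,Aₙ. -/
structure RdgPath (σ : Signature) (n : ℕ) where
  rules : Fin (n + 1) → Rule σ
  labels : Fin n → TAtom σ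

/-- `C` is a path of length `n` in the rule dependency graph of Pr: all of its
rules are variants of rules of Pr, and for each i the labelled atom p'(s) has a
positive nonnegated occurrence in the body of the source rule and p' is the
head predicate of the target rule. -/
def RdgPath.valid {n : ℕ} (C : RdgPath σ n) (Pr : List (Rule σ)) : Prop :=
  (∀ i, isVariant Pr (C.rules i)) ∧
  ∀ i : Fin n,
    C.labels i ∈ (C.rules i.castSucc).body.pnnAtoms ∧
    (C.rules i.succ).head = (C.labels i).1

/-- Variables (free and bound) of a term. -/
def Term.vars : Term σ → Set ℕ
  | .var n => {n}
  | .func _ ts => ⋃ i, (ts i).vars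

/-- Variables (free and bound) of a formula. -/
def Fml.vars : Fml σ → Set ℕ
  | .falsum => ∅
  | .atom _ ts => ⋃ i, (ts i).vars
  | .eq t₁ t₂ => t₁.vars ∪ t₂.vars
  | .and F G => F.vars ∪ G.vars
  | .or F G => F.vars ∪ G.vars
  | .imp F G => F.vars ∪ G.vars
  | .all n F => insert n F.vars
  | .ex n F => insert n F.vars

/-- Variables (free and bound) of a rule. -/
def Rule.vars (R : Rule σ) : Set ℕ := (⋃ i, (R.args i).vars) ∪ R.body.vars

/-- A chain: a path in the rule dependency graph whose rules pairwise have no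
common variables. -/
def RdgPath.isChain {n : ℕ} (C : RdgPath σ n) (Pr : List (Rule σ)) : Prop :=
  C.valid Pr ∧ ∀ i j, i ≠ j → Disjoint (C.rules i).vars (C.rules j).vars

/-- Satisfaction of the chain formula
F_C = ⋀_{i=1}^n (sⁱ = tⁱ) ∧ ⋀_{i=0}^n Bodyᵢ. -/
def RdgPath.satChainFml {n : ℕ} (C : RdgPath σ n) (I : Interp σ) (v : ℕ → I.U) : Prop :=
  (∀ i : Fin n,
    (⟨(C.labels i).1, fun j => ((C.labels i).2 j).eval I v⟩ : GAtom σ I.U) =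
      (C.rules i.succ).headEval I v) ∧
  ∀ i : Fin (n + 1), (C.rules i).body.Sat I v

/-- Pr is Γ-tight: for some positive n, for every chain C of length n,
Γ together with Comp[Pr] entails the universal closure of ¬F_C. -/
def GammaTight (Γ : Set (Fml σ)) (Pr : List (Rule σ)) : Prop :=
  ∃ n : ℕ, 0 < n ∧ ∀ C : RdgPath σ n, C.isChain Pr →
    ∀ I : Interp σ, I.satAll Γ → I.satComp Pr → ∀ v : ℕ → I.U, ¬ C.satChainFml I v

/- ## Infinitary propositional formulas -/

/-- Infinitary propositional formulas over a set `α` of atoms, with arbitrary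
(indexed) conjunctions and disjunctions. -/
inductive IFml (α : Type) : Type 1
  | atom : α → IFml α
  | falsum : IFml α
  | conj {ι : Type} (f : ι → IFml α) : IFml α
  | disj {ι : Type} (f : ι → IFml α) : IFml α
  | imp (F G : IFml α) : IFml α

variable {α : Type}

/-- Satisfaction of an infinitary formula by a propositional interpretation
(a set of atoms). -/
def IFml.ISat (J : Set α) : IFml α → Prop
  | .atom a => a ∈ J
  | .falsum => False
  | .conj f => ∀ i, (f i).ISat J
  | .disj f => ∃ i, (f i).ISat J
  | .imp F G => F.ISat J → G.ISat J

attribute [local instance] Classical.propDecidable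

/-- The reduct F^J of an infinitary formula. -/
noncomputable def IFml.reduct (J : Set α) : IFml α → IFml α
  | .atom a => if a ∈ J then .atom a else .falsum
  | .falsum => .falsum
  | .conj f => if (IFml.conj f).ISat J then .conj (fun i => (f i).reduct J) else .falsum
  | .disj f => if (IFml.disj f).ISat J then .disj (fun i => (f i).reduct J) else .falsum
  | .imp F G => if (IFml.imp F G).ISat J then .imp (F.reduct J) (G.reduct J) else .falsum

/-- `J` is a stable model of `F`: `J` is a minimal model of the reduct F^J. -/
def IFml.isStableModel (J : Set α) (F : IFml α) : Prop :=
  (F.reduct J).ISat J ∧ ∀ K : Set α, K ⊆ J → (F.reduct J).ISat K → K = J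

/-- An infinitary program: an (indexed) collection of rules A ← G with
A an atom and G an infinitary formula. -/
structure IProg (α : Type) where
  idx : Type
  head : idx → α
  body : idx → IFml α

/-- The infinitary program as an infinitary formula: the conjunction of the
implications G → A over all its rules A ← G. -/
def IProg.fml (P : IProg α) : IFml α := .conj fun i => (P.body i).imp (.atom (P.head i))

/-- `J` is supported by `P`: every atom of `J` is the head of a rule whose
body is satisfied by `J`. -/
def IProg.supported (P : IProg α) (J : Set α) : Prop :=
  ∀ a ∈ J, ∃ i, P.head i = a ∧ (P.body i).ISat J

mutual
  /-- Positive nonnegated atoms of an infinitary formula. -/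
  def IFml.Pnn : IFml α → Set α
    | .atom a => {a}
    | .falsum => ∅
    | .conj f => ⋃ i, (f i).Pnn
    | .disj f => ⋃ i, (f i).Pnn
    | .imp _ .falsum => ∅
    | .imp F G => F.Nnn ∪ G.Pnn
  /-- Negative nonnegated atoms of an infinitary formula. -/
  def IFml.Nnn : IFml α → Set α
    | .atom _ => ∅
    | .falsum => ∅
    | .conj f => ⋃ i, (f i).Nnn
    | .disj f => ⋃ i, (f i).Nnn
    | .imp _ .falsum => ∅
    | .imp F G => F.Pnn ∪ G.Nnn
end

/-- `a'` is a parent of `a` relative to `P` and `J`. -/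
def IProg.parent (P : IProg α) (J : Set α) (a' a : α) : Prop :=
  a ∈ J ∧ a' ∈ J ∧ ∃ i, P.head i = a ∧ (P.body i).ISat J ∧ a' ∈ (P.body i).Pnn

/-- `P` is tight on `J`: there is no infinite sequence A₀, A₁, ... of elements
of `J` in which each A_{i+1} is a parent of A_i. -/
def IProg.tightOn (P : IProg α) (J : Set α) : Prop :=
  ¬ ∃ A : ℕ → α, (∀ n, A n ∈ J) ∧ ∀ n, P.parent J (A (n + 1)) (A n)

/- ## Grounding -/

/-- The grounding gr_I(F) of a first-order formula relative to an
interpretation `I` (and an assignment `v` for the free variables). -/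
noncomputable def Fml.ground (I : Interp σ) (v : ℕ → I.U) : Fml σ → IFml (GAtom σ I.U)
  | .falsum => .falsum
  | .atom p ts => .atom ⟨p, fun i => (ts i).eval I v⟩
  | .eq t₁ t₂ => if t₁.eval I v = t₂.eval I v then .imp .falsum .falsum else .falsum
  | .and F G => .conj fun b : Bool => cond b (F.ground I v) (G.ground I v)
  | .or F G => .disj fun b : Bool => cond b (F.ground I v) (G.ground I v)
  | .imp F G => .imp (F.ground I v) (G.ground I v)
  | .all n F => .conj fun d : I.U => F.ground I (Function.update v n d)
  | .ex n F => .disj fun d : I.U => F.ground I (Function.update v n d)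

/-- I^r : the set of ground atoms satisfied by `I`. -/
def Interp.ir (I : Interp σ) : Set (GAtom σ I.U) := {A | I.rel A}

/-- The infinitary program gr_I(Pr) obtained by grounding a Lloyd-Topor
program: one ground rule for every rule of Pr and every assignment. -/
noncomputable def groundProg (I : Interp σ) (Pr : List (Rule σ)) : IProg (GAtom σ I.U) where
  idx := {R : Rule σ // R ∈ Pr} × (ℕ → I.U)
  head := fun x => (x.1.1).headEval I x.2
  body := fun x => (x.1.1).body.ground I x.2

/-- Free variables of a formula. -/
def Fml.freeVars : Fml σ → Set ℕ
  | .falsum => ∅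
  | .atom _ ts => ⋃ i, (ts i).vars
  | .eq t₁ t₂ => t₁.vars ∪ t₂.vars
  | .and F G => F.freeVars ∪ G.freeVars
  | .or F G => F.freeVars ∪ G.freeVars
  | .imp F G => F.freeVars ∪ G.freeVars
  | .all n F => F.freeVars \ {n}
  | .ex n F => F.freeVars \ {n}

/- ## Auxiliary lemmas for Proposition 2 -/

lemma Term.rename_id (t : Term σ) : t.rename id = t := by
  induction t with
  | var n => rfl
  | func f ts ih => simp only [Term.rename]; congr 1; funext i; exact ih i

lemma Fml.rename_id (F : Fml σ) : F.rename id = F := by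
  induction F with
  | falsum => rfl
  | atom p ts => simp only [Fml.rename]; congr 1; funext i; exact Term.rename_id _
  | eq t₁ t₂ => simp only [Fml.rename, Term.rename_id]
  | and F G ihF ihG => simp only [Fml.rename, ihF, ihG]
  | or F G ihF ihG => simp only [Fml.rename, ihF, ihG]
  | imp F G ihF ihG => simp only [Fml.rename, ihF, ihG]
  | all n F ih => simp only [Fml.rename, ih]; rfl
  | ex n F ih => simp only [Fml.rename, ih]; rfl

lemma Rule.rename_id (R : Rule σ) : R.rename id = R := by
  cases R with
  | mk h a b =>
    simp only [Rule.rename, Fml.rename_id]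
    congr 1
    funext i; exact Term.rename_id _

lemma pnn_imp (F : Fml σ) {G : Fml σ} (h : G ≠ .falsum) :
    (F.imp G).pnn = F.nnn ∪ G.pnn := by
  cases G <;> first | exact absurd rfl h | rfl

lemma nnn_imp (F : Fml σ) {G : Fml σ} (h : G ≠ .falsum) :
    (F.imp G).nnn = F.pnn ∪ G.nnn := by
  cases G <;> first | exact absurd rfl h | rfl

lemma pnnAtoms_imp (F : Fml σ) {G : Fml σ} (h : G ≠ .falsum) :
    (F.imp G).pnnAtoms = F.nnnAtoms ∪ G.pnnAtoms := by
  cases G <;> first | exact absurd rfl h | rfl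

lemma nnnAtoms_imp (F : Fml σ) {G : Fml σ} (h : G ≠ .falsum) :
    (F.imp G).nnnAtoms = F.pnnAtoms ∪ G.nnnAtoms := by
  cases G <;> first | exact absurd rfl h | rfl

lemma rename_ne_falsum {ρ : ℕ → ℕ} {G : Fml σ} (h : G ≠ Fml.falsum) :
    G.rename ρ ≠ Fml.falsum := by
  cases G <;> simp [Fml.rename] at h ⊢

/-- The predicate of an atom with a positive (negative) nonnegated occurrence
in a renamed formula has a positive (negative) nonnegated occurrence in the
original formula. -/
lemma pred_of_pnnAtoms_rename (ρ : ℕ → ℕ) (F : Fml σ) :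
    (∀ A ∈ (F.rename ρ).pnnAtoms, A.1 ∈ F.pnn) ∧
    (∀ A ∈ (F.rename ρ).nnnAtoms, A.1 ∈ F.nnn) := by
  induction F with
  | falsum => exact ⟨fun A hA => hA.elim, fun A hA => hA.elim⟩
  | atom p ts =>
    refine ⟨fun A hA => ?_, fun A hA => hA.elim⟩
    have : A = ⟨p, fun i => (ts i).rename ρ⟩ := hA
    rw [this]
    rfl
  | eq t₁ t₂ => exact ⟨fun A hA => hA.elim, fun A hA => hA.elim⟩
  | and F G ihF ihG =>
    exact ⟨fun A hA => hA.elim (fun h => Or.inl (ihF.1 A h)) (fun h => Or.inr (ihG.1 A h)),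
           fun A hA => hA.elim (fun h => Or.inl (ihF.2 A h)) (fun h => Or.inr (ihG.2 A h))⟩
  | or F G ihF ihG =>
    exact ⟨fun A hA => hA.elim (fun h => Or.inl (ihF.1 A h)) (fun h => Or.inr (ihG.1 A h)),
           fun A hA => hA.elim (fun h => Or.inl (ihF.2 A h)) (fun h => Or.inr (ihG.2 A h))⟩
  | imp F G ihF ihG =>
    by_cases hG : G = Fml.falsum
    · subst hG
      exact ⟨fun A hA => hA.elim, fun A hA => hA.elim⟩
    · have hren : (F.imp G).rename ρ = (F.rename ρ).imp (G.rename ρ) := rfl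
      rw [hren, pnnAtoms_imp _ (rename_ne_falsum hG), nnnAtoms_imp _ (rename_ne_falsum hG),
        pnn_imp _ hG, nnn_imp _ hG]
      exact ⟨fun A hA => hA.elim (fun h => Or.inl (ihF.2 A h)) (fun h => Or.inr (ihG.1 A h)),
             fun A hA => hA.elim (fun h => Or.inl (ihF.1 A h)) (fun h => Or.inr (ihG.2 A h))⟩
  | all m F ih => exact ih
  | ex m F ih => exact ih

/-- Every predicate with a positive nonnegated occurrence comes from some
atom with a positive nonnegated occurrence. -/
lemma pnn_to_pnnAtoms (F : Fml σ) :
    (∀ q ∈ F.pnn, ∃ ts, (⟨q, ts⟩ : TAtom σ) ∈ F.pnnAtoms) ∧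
    (∀ q ∈ F.nnn, ∃ ts, (⟨q, ts⟩ : TAtom σ) ∈ F.nnnAtoms) := by
  induction F with
  | falsum => exact ⟨fun q hq => hq.elim, fun q hq => hq.elim⟩
  | atom p ts =>
    refine ⟨fun q hq => ?_, fun q hq => hq.elim⟩
    have : q = p := hq
    subst this
    exact ⟨ts, rfl⟩
  | eq t₁ t₂ => exact ⟨fun q hq => hq.elim, fun q hq => hq.elim⟩
  | and F G ihF ihG =>
    refine ⟨fun q hq => ?_, fun q hq => ?_⟩
    · rcases hq with h | h
      · obtain ⟨ts, hts⟩ := ihF.1 q h; exact ⟨ts, Or.inl hts⟩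
      · obtain ⟨ts, hts⟩ := ihG.1 q h; exact ⟨ts, Or.inr hts⟩
    · rcases hq with h | h
      · obtain ⟨ts, hts⟩ := ihF.2 q h; exact ⟨ts, Or.inl hts⟩
      · obtain ⟨ts, hts⟩ := ihG.2 q h; exact ⟨ts, Or.inr hts⟩
  | or F G ihF ihG =>
    refine ⟨fun q hq => ?_, fun q hq => ?_⟩
    · rcases hq with h | h
      · obtain ⟨ts, hts⟩ := ihF.1 q h; exact ⟨ts, Or.inl hts⟩
      · obtain ⟨ts, hts⟩ := ihG.1 q h; exact ⟨ts, Or.inr hts⟩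
    · rcases hq with h | h
      · obtain ⟨ts, hts⟩ := ihF.2 q h; exact ⟨ts, Or.inl hts⟩
      · obtain ⟨ts, hts⟩ := ihG.2 q h; exact ⟨ts, Or.inr hts⟩
  | imp F G ihF ihG =>
    by_cases hG : G = Fml.falsum
    · subst hG
      exact ⟨fun q hq => hq.elim, fun q hq => hq.elim⟩
    · rw [pnnAtoms_imp _ hG, nnnAtoms_imp _ hG, pnn_imp _ hG, nnn_imp _ hG]
      refine ⟨fun q hq => ?_, fun q hq => ?_⟩
      · rcases hq with h | h
        · obtain ⟨ts, hts⟩ := ihF.2 q h; exact ⟨ts, Or.inl hts⟩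
        · obtain ⟨ts, hts⟩ := ihG.1 q h; exact ⟨ts, Or.inr hts⟩
      · rcases hq with h | h
        · obtain ⟨ts, hts⟩ := ihF.1 q h; exact ⟨ts, Or.inl hts⟩
        · obtain ⟨ts, hts⟩ := ihG.2 q h; exact ⟨ts, Or.inr hts⟩
  | all m F ih => exact ih
  | ex m F ih => exact ih

/-- Edges of the rule dependency graph induce edges of the predicate
dependency graph between the head predicates. -/
lemma depEdge_of_rdg {Pr : List (Rule σ)} {R : Rule σ} {A : TAtom σ}
    (hR : isVariant Pr R) (hA : A ∈ R.body.pnnAtoms) :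
    depEdge Pr R.head A.1 := by
  obtain ⟨R₀, hR₀, ρ, -, rfl⟩ := hR
  exact ⟨R₀, hR₀, rfl, (pred_of_pnnAtoms_rename ρ R₀.body).1 A hA⟩

/-- Extract a finite indexed path from TransGen. -/
lemma transGen_path {α : Type*} {r : α → α → Prop} {a b : α}
    (h : Relation.TransGen r a b) :
    ∃ k : ℕ, ∃ g : ℕ → α, g 0 = a ∧ g (k + 1) = b ∧ ∀ i ≤ k, r (g i) (g (i + 1)) := by
  induction h with
  | @single c hab =>
    refine ⟨0, fun n => if n = 0 then a else c, by simp, by simp, ?_⟩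
    intro i hi
    have : i = 0 := Nat.le_zero.mp hi
    subst this; simpa using hab
  | @tail b c hab hbc ih =>
    obtain ⟨k, g, hg0, hgk, hge⟩ := ih
    refine ⟨k + 1, fun n => if n ≤ k + 1 then g n else c, by simpa using hg0,
      by simp only [if_neg (show ¬ (k + 1 + 1 ≤ k + 1) by omega)], ?_⟩
    intro i hi
    rcases Nat.lt_or_ge i (k + 1) with h' | h'
    · simp only [if_pos (Nat.le_of_lt h'), if_pos (Nat.succ_le_of_lt h')]
      exact hge i (Nat.lt_succ_iff.mp h')
    · have : i = k + 1 := le_antisymm hi h'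
      subst this
      simp only [if_pos (le_refl (k + 1)), if_neg (show ¬ (k + 1 + 1 ≤ k + 1) by omega), hgk]
      exact hbc

/-- From a cycle, an infinite edge sequence. -/
lemma transGen_cycle_seq {α : Type*} {r : α → α → Prop} {a : α}
    (h : Relation.TransGen r a a) :
    ∃ f : ℕ → α, ∀ n, r (f n) (f (n + 1)) := by
  obtain ⟨k, g, hg0, hgk, hge⟩ := transGen_path h
  refine ⟨fun n => g (n % (k + 1)), fun n => ?_⟩
  show r (g (n % (k + 1))) (g ((n + 1) % (k + 1)))
  have hm : n % (k + 1) < k + 1 := Nat.mod_lt _ (Nat.succ_pos k)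
  have key : g ((n + 1) % (k + 1)) = g (n % (k + 1) + 1) := by
    rcases Nat.lt_or_ge (n % (k + 1) + 1) (k + 1) with h' | h'
    · congr 1
      rw [← Nat.mod_add_mod, Nat.mod_eq_of_lt h']
    · have h2 : n % (k + 1) = k := by omega
      have h3 : (n + 1) % (k + 1) = 0 := by
        have hd := Nat.div_add_mod n (k + 1)
        have he : n + 1 = (k + 1) * (n / (k + 1) + 1) := by
          rw [Nat.mul_add, Nat.mul_one]; omega
        rw [he, Nat.mul_mod_right]
      rw [h3, h2, hg0, hgk]
  rw [key]
  exact hge _ (Nat.lt_succ_iff.mp hm)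


/-- **Proposition 2.** A Lloyd-Topor program is tight iff for some positive n
its rule dependency graph has no paths of length n. -/
theorem proposition2 {σ : Signature} (Pr : List (Rule σ)) :
    Tight Pr ↔ ∃ n : ℕ, 0 < n ∧ ∀ C : RdgPath σ n, ¬ C.valid Pr := by
  constructor
  · -- tight ⇒ no long paths
    intro hT
    refine ⟨Pr.length + 1, Nat.succ_pos _, fun C hC => ?_⟩
    obtain ⟨hvar, hedge⟩ := hC
    -- each rule of the path points to a rule of Pr with the same head
    have hidx : ∀ i : Fin (Pr.length + 2), ∃ j : Fin Pr.length,
        (Pr.get j).head = (C.rules i).head := by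
      intro i
      obtain ⟨R₀, hR₀, ρ, -, hEq⟩ := hvar i
      obtain ⟨j, hj⟩ := List.mem_iff_get.mp hR₀
      exact ⟨j, by rw [hj, hEq]; rfl⟩
    choose idx hidxEq using hidx
    have hcard : Fintype.card (Fin Pr.length) < Fintype.card (Fin (Pr.length + 2)) := by
      simp only [Fintype.card_fin]; omega
    obtain ⟨i, j, hij, hmap⟩ := Fintype.exists_ne_map_eq_of_card_lt idx hcard
    have hheads : (C.rules i).head = (C.rules j).head := by
      rw [← hidxEq i, ← hidxEq j, hmap]
    -- edges of the predicate dependency graph along the path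
    have hE : ∀ k : Fin (Pr.length + 1),
        depEdge Pr (C.rules k.castSucc).head (C.rules k.succ).head := by
      intro k
      obtain ⟨h1, h2⟩ := hedge k
      rw [h2]
      exact depEdge_of_rdg (hvar k.castSucc) h1
    -- transitive chains along the path
    have chain : ∀ jv : ℕ, ∀ hj : jv < Pr.length + 2, ∀ iv : ℕ, ∀ hi : iv < Pr.length + 2, iv < jv →
        Relation.TransGen (depEdge Pr)
          (C.rules ⟨iv, hi⟩).head (C.rules ⟨jv, hj⟩).head := by
      intro jv
      induction jv with
      | zero => intro _ _ _ h; omega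
      | succ m ihm =>
        intro hj iv hi hlt
        have hmn : m < Pr.length + 1 := by omega
        have edge : depEdge Pr (C.rules ⟨m, by omega⟩).head (C.rules ⟨m + 1, hj⟩).head :=
          hE ⟨m, hmn⟩
        rcases Nat.lt_or_ge iv m with h' | h'
        · exact (ihm (by omega) iv hi h').tail edge
        · have : iv = m := by omega
          subst this
          exact Relation.TransGen.single edge
    -- a repeated head yields a cycle
    have hij' : i.val ≠ j.val := fun h => hij (Fin.ext h)
    rcases Nat.lt_or_ge i.val j.val with h' | h'
    · have := chain j.val j.isLt i.val i.isLt h'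
      rw [hheads] at this
      exact hT _ this
    · have h'' : j.val < i.val := by omega
      have := chain i.val i.isLt j.val j.isLt h''
      rw [← hheads] at this
      exact hT _ this
  · -- no long paths ⇒ tight
    rintro ⟨n, hnpos, hno⟩ p hcyc
    obtain ⟨f, hf⟩ := transGen_cycle_seq hcyc
    have hch : ∀ m : ℕ, ∃ R ∈ Pr, R.head = f m ∧
        ∃ ts, (⟨f (m + 1), ts⟩ : TAtom σ) ∈ R.body.pnnAtoms := by
      intro m
      obtain ⟨R, hR, hhead, hq⟩ := hf m
      obtain ⟨ts, hts⟩ := (pnn_to_pnnAtoms R.body).1 _ hq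
      exact ⟨R, hR, hhead, ts, hts⟩
    choose R hRmem hRhead ts hts using hch
    refine hno ⟨fun i => R i.val, fun i => ⟨f (i.val + 1), ts i.val⟩⟩ ⟨?_, ?_⟩
    · intro i
      exact ⟨R i.val, hRmem i.val, id, Function.injective_id, (Rule.rename_id _).symm⟩
    · intro i
      exact ⟨hts i.val, hRhead i.succ.val⟩

end LT
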